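/- arXiv:2012.02703 — 9 statements merged into one kernel-verified Lean document; each statement's English description precedes it below -/
import Mathlib

section
/- Under C-clique influence, if i is maximal and j is minimal at time t, then B_i^{t+1} − B_j^{t+1} ≤ B_i^t − B_j^t (the difference of opinion among extreme agents cannot grow). -/
open Finset

section CliqueStep

variable {ι : Type*} [Fintype ι]

noncomputable def cliqueStep (C : ℝ) (b : ι → ℝ) (i : ι) : ℝ :=
  b i + C / Fintype.card ι * ∑ k, (b k - b i)

/-- The common term `C · mean b` cancels, so every pairwise difference is scaled by `1 - C`. -/
theorem cliqueStep_sub_cliqueStep (C : ℝ) (b : ι → ℝ) (i j : ι) :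
    cliqueStep C b i - cliqueStep C b j = (1 - C) * (b i - b j) := by
  have : Nonempty ι := ⟨i⟩
  have hcard : (Fintype.card ι : ℝ) ≠ 0 := Nat.cast_ne_zero.mpr Fintype.card_ne_zero
  simp only [cliqueStep, sum_sub_distrib, sum_const, card_univ, nsmul_eq_mul]
  field_simp
  ring

theorem cliqueStep_sub_cliqueStep_le {C : ℝ} (hC : 0 ≤ C) (b : ι → ℝ) {i j : ι}
    (hji : b j ≤ b i) : cliqueStep C b i - cliqueStep C b j ≤ b i - b j := by
  rw [cliqueStep_sub_cliqueStep]
  nlinarith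

end CliqueStep

theorem clique_decreasing_difference_general (n : ℕ) (C : ℝ) (hC : C ∈ Set.Ioc (0:ℝ) 1)
    (B : ℕ → Fin n → ℝ)
    (hupd : ∀ t i, B (t+1) i = B t i + (C / n) * ∑ k, (B t k - B t i))
    (t : ℕ) (i j : Fin n) (hmin : ∀ k, B t j ≤ B t k) :
    B (t+1) i - B (t+1) j ≤ B t i - B t j := by
  have hstep : ∀ k, B (t+1) k = cliqueStep C (B t) k := fun k => by
    rw [hupd, cliqueStep, Fintype.card_fin]
  rw [hstep, hstep]
  exact cliqueStep_sub_cliqueStep_le hC.1.le (B t) (hmin i)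

theorem clique_decreasing_difference (n : ℕ) (hn : 0 < n) (C : ℝ) (hC : C ∈ Set.Ioc (0:ℝ) 1)
    (B : ℕ → Fin n → ℝ) (hB : ∀ t i, B t i ∈ Set.Icc (0:ℝ) 1)
    (hupd : ∀ t i, B (t+1) i = B t i + (C / n) * ∑ k, (B t k - B t i))
    (t : ℕ) (i j : Fin n) (hmax : ∀ k, B t k ≤ B t i) (hmin : ∀ k, B t j ≤ B t k) :
    B (t+1) i - B (t+1) j ≤ B t i - B t j :=
  clique_decreasing_difference_general n C hC B hupd t i j hmin
end

section
/- Under C-clique influence with C < 1, let i be maximal and j minimal at time 0 with B_i^0 > B_j^0. For ε > 0, let T_ε = log_{1−C}(ε / (B_i^0 − B_j^0)). Then for every natural number t > T_ε, B_i^t − B_j^t < ε. -/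
/-!
The clique update moves every agent a fraction `C` of the way to the common mean, so the gap
between any two agents shrinks by exactly the factor `1 - C` per step:
`B t i - B t j = (1 - C) ^ t * (B 0 i - B 0 j)`. Beyond `T_ε` this geometric factor is below
`ε / (B 0 i - B 0 j)`, because `logb (1 - C)` is decreasing.
-/

open Finset

section Consensus

variable {ι : Type*} [Fintype ι]

theorem sub_eq_of_consensus_step (a : ℝ) (x y : ι → ℝ)
    (hy : ∀ i, y i = x i + a * ∑ k, (x k - x i)) (i j : ι) :
    y i - y j = (1 - a * Fintype.card ι) * (x i - x j) := by
  simp only [hy, sum_sub_distrib, sum_const, card_univ, nsmul_eq_mul]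
  ring

theorem sub_eq_pow_mul_of_consensus (a : ℝ) (B : ℕ → ι → ℝ)
    (hB : ∀ t i, B (t + 1) i = B t i + a * ∑ k, (B t k - B t i)) (i j : ι) (t : ℕ) :
    B t i - B t j = (1 - a * Fintype.card ι) ^ t * (B 0 i - B 0 j) := by
  induction t with
  | zero => simp
  | succ t ih => rw [sub_eq_of_consensus_step a (B t) (B (t + 1)) (hB t) i j, ih, pow_succ']; ring

end Consensus

theorem pow_mul_lt_of_logb_lt {r D ε : ℝ} (hr₀ : 0 < r) (hr₁ : r < 1) (hD : 0 < D) (hε : 0 < ε)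
    {t : ℕ} (ht : Real.logb r (ε / D) < t) : r ^ t * D < ε := by
  rw [Real.logb_lt_iff_lt_rpow_of_base_lt_one hr₀ hr₁ (div_pos hε hD), Real.rpow_natCast,
    lt_div_iff₀ hD] at ht
  exact ht

theorem clique_convergence_time_general (n : ℕ) (C : ℝ) (hC : C ∈ Set.Ioo (0:ℝ) 1)
    (B : ℕ → Fin n → ℝ)
    (hupd : ∀ t i, B (t+1) i = B t i + (C / n) * ∑ k, (B t k - B t i))
    (i j : Fin n)
    (hij : B 0 j < B 0 i) (ε : ℝ) (hε : 0 < ε) :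
    ∀ t : ℕ, (t : ℝ) > Real.logb (1 - C) (ε / (B 0 i - B 0 j)) →
      B t i - B t j < ε := by
  intro t ht
  have hn : (n : ℝ) ≠ 0 := Nat.cast_ne_zero.mpr (Fin.pos i).ne'
  have hrate : 1 - C / n * Fintype.card (Fin n) = 1 - C := by
    rw [Fintype.card_fin, div_mul_cancel₀ C hn]
  rw [sub_eq_pow_mul_of_consensus _ B hupd i j t, hrate]
  exact pow_mul_lt_of_logb_lt (by linarith [hC.2]) (by linarith [hC.1]) (sub_pos.mpr hij) hε ht

theorem clique_convergence_time (n : ℕ) (hn : 0 < n) (C : ℝ) (hC : C ∈ Set.Ioo (0:ℝ) 1)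
    (B : ℕ → Fin n → ℝ) (hB : ∀ t i, B t i ∈ Set.Icc (0:ℝ) 1)
    (hupd : ∀ t i, B (t+1) i = B t i + (C / n) * ∑ k, (B t k - B t i))
    (i j : Fin n) (hmax : ∀ k, B 0 k ≤ B 0 i) (hmin : ∀ k, B 0 j ≤ B 0 k)
    (hij : B 0 j < B 0 i) (ε : ℝ) (hε : 0 < ε) :
    ∀ t : ℕ, (t : ℝ) > Real.logb (1 - C) (ε / (B 0 i - B 0 j)) →
      B t i - B t j < ε :=
  clique_convergence_time_general n C hC B hupd i j hij ε hε
end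

section
/- Under C-clique influence, if i is maximal and j minimal at time 0, then lim_{t→∞} (B_i^t − B_j^t) = 0. -/
/-!
The update adds the same quantity `c · ∑ₖ Bₖ` to every agent and shrinks each belief by the
factor `1 - c · n`, so every pairwise difference is multiplied by `1 - C` at each step. Since
`0 < C ≤ 1`, the differences decay geometrically to `0`.
-/

section CliqueUpdate

variable {ι : Type*} [Fintype ι] {c : ℝ} {B : ℕ → ι → ℝ}

theorem clique_update_sub_succ
    (hupd : ∀ t i, B (t + 1) i = B t i + c * ∑ k, (B t k - B t i)) (t : ℕ) (i j : ι) :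
    B (t + 1) i - B (t + 1) j = (1 - c * Fintype.card ι) * (B t i - B t j) := by
  simp only [hupd, Finset.sum_sub_distrib, Finset.sum_const, Finset.card_univ, nsmul_eq_mul]
  ring

theorem clique_update_sub_eq_pow_mul
    (hupd : ∀ t i, B (t + 1) i = B t i + c * ∑ k, (B t k - B t i)) (t : ℕ) (i j : ι) :
    B t i - B t j = (1 - c * Fintype.card ι) ^ t * (B 0 i - B 0 j) := by
  induction t with
  | zero => simp
  | succ t ih => rw [clique_update_sub_succ hupd, ih, pow_succ']; ring

end CliqueUpdate

theorem clique_extreme_difference_tendsto_zero_general (n : ℕ) (hn : 0 < n) (C : ℝ)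
    (hC : C ∈ Set.Ioc (0:ℝ) 1)
    (B : ℕ → Fin n → ℝ)
    (hupd : ∀ t i, B (t+1) i = B t i + (C / n) * ∑ k, (B t k - B t i))
    (i j : Fin n) :
    Filter.Tendsto (fun t => B t i - B t j) Filter.atTop (nhds 0) := by
  have hrate : 1 - C / n * Fintype.card (Fin n) = 1 - C := by
    rw [Fintype.card_fin, div_mul_cancel₀ C (Nat.cast_ne_zero.mpr hn.ne')]
  have hcontract : |1 - C| < 1 := abs_lt.mpr ⟨by linarith [hC.2], by linarith [hC.1]⟩
  have hdiff (t : ℕ) : B t i - B t j = (1 - C) ^ t * (B 0 i - B 0 j) := by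
    rw [clique_update_sub_eq_pow_mul hupd, hrate]
  rw [funext hdiff, ← zero_mul (B 0 i - B 0 j)]
  exact (tendsto_pow_atTop_nhds_zero_of_abs_lt_one hcontract).mul_const _

theorem clique_extreme_difference_tendsto_zero (n : ℕ) (hn : 0 < n) (C : ℝ)
    (hC : C ∈ Set.Ioc (0:ℝ) 1)
    (B : ℕ → Fin n → ℝ) (hB : ∀ t i, B t i ∈ Set.Icc (0:ℝ) 1)
    (hupd : ∀ t i, B (t+1) i = B t i + (C / n) * ∑ k, (B t k - B t i))
    (i j : Fin n) (hmax : ∀ k, B 0 k ≤ B 0 i) (hmin : ∀ k, B 0 j ≤ B 0 k) :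
    Filter.Tendsto (fun t => B t i - B t j) Filter.atTop (nhds 0) :=
  clique_extreme_difference_tendsto_zero_general n hn C hC B hupd i j
end

section
/- Under the general update rule, for any agents i, k and any m ≥ 1, B_i^{t+m} ≤ max^t + (1/n) · I(k,i) · (B_k^{t+m−1} − max^t), where max^t = max_j B_j^t. -/
/-!
Let `M` be the largest belief at time `t`. Since influence weights lie in `[0, 1]` and the step
size is `1 / n`, one update moves `B i` at most the full distance `M - B i` towards `M`, so `M`
stays an upper bound forever. Writing each pull `B j - B i` as `(M - B i) - (M - B j)`, the
first parts contribute at most `M - B i` in total, while the second parts are all nonnegative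
and the one coming from agent `k` alone already subtracts `(1 / n) I(k,i) (M - B k)`.
-/

open Finset

variable {ι : Type*} [Fintype ι]

/-- `I j i` is the influence of agent `j` on agent `i`. -/
def beliefStep (c : ℝ) (I : ι → ι → ℝ) (x : ι → ℝ) (i : ι) : ℝ :=
  x i + c * ∑ j, I j i * (x j - x i)

section

variable {c : ℝ} {I : ι → ι → ℝ} {x : ι → ℝ} {M : ℝ}

theorem beliefStep_le_add_mul (hc : 0 ≤ c) (hcard : c * Fintype.card ι ≤ 1)
    (hI : ∀ i j, I i j ∈ Set.Icc (0 : ℝ) 1) (hx : ∀ j, x j ≤ M) (i k : ι) :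
    beliefStep c I x i ≤ M + c * I k i * (x k - M) := by
  have hsplit : ∑ j, I j i * (x j - x i) = ∑ j, I j i * (M - x i) - ∑ j, I j i * (M - x j) := by
    rw [← sum_sub_distrib]; congr 1 with j; ring
  have hpush : ∑ j, I j i * (M - x i) ≤ Fintype.card ι * (M - x i) := by
    calc ∑ j, I j i * (M - x i) ≤ ∑ _j : ι, (M - x i) :=
          sum_le_sum fun j _ => mul_le_of_le_one_left (sub_nonneg.2 (hx i)) (hI j i).2
      _ = Fintype.card ι * (M - x i) := by simp [mul_sub]
  have hpull : I k i * (M - x k) ≤ ∑ j, I j i * (M - x j) :=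
    single_le_sum (f := fun j => I j i * (M - x j))
      (fun j _ => mul_nonneg (hI j i).1 (sub_nonneg.2 (hx j))) (mem_univ k)
  have hfull : c * (Fintype.card ι * (M - x i)) ≤ M - x i := by
    rw [← mul_assoc]; exact mul_le_of_le_one_left (sub_nonneg.2 (hx i)) hcard
  unfold beliefStep
  rw [hsplit]
  linarith [mul_le_mul_of_nonneg_left hpush hc, mul_le_mul_of_nonneg_left hpull hc]

theorem beliefStep_le (hc : 0 ≤ c) (hcard : c * Fintype.card ι ≤ 1)
    (hI : ∀ i j, I i j ∈ Set.Icc (0 : ℝ) 1) (hx : ∀ j, x j ≤ M) (i : ι) :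
    beliefStep c I x i ≤ M := by
  have hnonpos : c * I i i * (x i - M) ≤ 0 :=
    mul_nonpos_of_nonneg_of_nonpos (mul_nonneg hc (hI i i).1) (sub_nonpos.2 (hx i))
  linarith [beliefStep_le_add_mul hc hcard hI hx i i]

theorem le_of_forall_beliefStep {B : ℕ → ι → ℝ} (hc : 0 ≤ c) (hcard : c * Fintype.card ι ≤ 1)
    (hI : ∀ i j, I i j ∈ Set.Icc (0 : ℝ) 1) (hB : ∀ t, B (t + 1) = beliefStep c I (B t))
    {t : ℕ} (hM : ∀ j, B t j ≤ M) (s : ℕ) (j : ι) : B (t + s) j ≤ M := by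
  induction s generalizing j with
  | zero => exact hM j
  | succ s ih => rw [← add_assoc, hB]; exact beliefStep_le hc hcard hI ih j

end

theorem step_upper_bound_general (n : ℕ) (hn : 0 < n)
    (I : Fin n → Fin n → ℝ) (hI : ∀ i j, I i j ∈ Set.Icc (0:ℝ) 1)
    (B : ℕ → Fin n → ℝ)
    (hupd : ∀ t i, B (t+1) i = B t i + (1 / n) * ∑ j, I j i * (B t j - B t i))
    (t m : ℕ) (hm : 1 ≤ m) (i k : Fin n) :
    B (t + m) i ≤ Finset.univ.sup' ⟨⟨0, hn⟩, Finset.mem_univ _⟩ (B t) +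
      (1 / n) * I k i *
        (B (t + m - 1) k - Finset.univ.sup' ⟨⟨0, hn⟩, Finset.mem_univ _⟩ (B t)) := by
  set M := Finset.univ.sup' ⟨⟨0, hn⟩, Finset.mem_univ _⟩ (B t)
  have hc : (0 : ℝ) ≤ 1 / n := by positivity
  have hcard : (1 / n : ℝ) * Fintype.card (Fin n) ≤ 1 := by
    rw [Fintype.card_fin, one_div_mul_cancel (by positivity)]
  have hB : ∀ s, B (s + 1) = beliefStep (1 / n) I (B s) := fun s => funext (hupd s)
  have hbound := le_of_forall_beliefStep hc hcard hI hB (t := t) (M := M)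
    fun j => le_sup' (B t) (mem_univ j)
  obtain ⟨s, rfl⟩ := Nat.exists_eq_add_of_le' hm
  rw [show t + (s + 1) - 1 = t + s by omega, ← add_assoc, hB]
  exact beliefStep_le_add_mul hc hcard hI (hbound s) i k

theorem step_upper_bound (n : ℕ) (hn : 0 < n)
    (I : Fin n → Fin n → ℝ) (hI : ∀ i j, I i j ∈ Set.Icc (0:ℝ) 1)
    (B : ℕ → Fin n → ℝ) (hB : ∀ t i, B t i ∈ Set.Icc (0:ℝ) 1)
    (hupd : ∀ t i, B (t+1) i = B t i + (1 / n) * ∑ j, I j i * (B t j - B t i))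
    (t m : ℕ) (hm : 1 ≤ m) (i k : Fin n) :
    B (t + m) i ≤ Finset.univ.sup' ⟨⟨0, hn⟩, Finset.mem_univ _⟩ (B t) +
      (1 / n) * I k i *
        (B (t + m - 1) k - Finset.univ.sup' ⟨⟨0, hn⟩, Finset.mem_univ _⟩ (B t)) :=
  step_upper_bound_general n hn I hI B hupd t m hm i k
end

section
/- Under the general update rule, if there is an influence path p from agent i to agent j with product influence C (the product of the edge influence values along p), then B_j^{t+|p|} ≤ max^t + (C / n^{|p|}) · (B_i^t − max^t). -/
/-!
Write `M` for the maximal belief at time `s`. The update rule expresses the gap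
`M - B (s+1) b` as the average over `j` of `(1 - I j b) (M - B s b) + I j b (M - B s j)`,
a sum of nonnegative terms. Hence `M` stays an upper bound, and keeping only the term
`j = a` gives `M - B (s+1) b ≥ (I a b / n) (M - B s a)`. Chaining this one-edge estimate
along the path multiplies the factors `I a b / n`.
-/

/-- An influence path: a finite sequence of distinct agents, each having
strictly positive direct influence over the next. -/
def IsInfluencePath {n : ℕ} (I : Fin n → Fin n → ℝ) (l : List (Fin n)) : Prop :=
  l.Nodup ∧ l.Chain' (fun a b => 0 < I a b)

/-- The product influence along a path: the product of the direct influences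
of consecutive agents. -/
def pathInfluence {n : ℕ} (I : Fin n → Fin n → ℝ) (l : List (Fin n)) : ℝ :=
  ((l.zip l.tail).map (fun p => I p.1 p.2)).prod

section

variable {n : ℕ} {I : Fin n → Fin n → ℝ} {B : ℕ → Fin n → ℝ}

@[simp]
lemma pathInfluence_singleton (a : Fin n) : pathInfluence I [a] = 1 := by
  simp [pathInfluence]

@[simp]
lemma pathInfluence_cons_cons (a b : Fin n) (l : List (Fin n)) :
    pathInfluence I (a :: b :: l) = I a b * pathInfluence I (b :: l) := by
  simp [pathInfluence]

lemma pathInfluence_nonneg (hI : ∀ i j, 0 ≤ I i j) (l : List (Fin n)) :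
    0 ≤ pathInfluence I l := by
  refine List.prod_nonneg fun x hx => ?_
  obtain ⟨p, -, rfl⟩ := List.mem_map.mp hx
  exact hI p.1 p.2

lemma sub_update_eq_sum
    (hupd : ∀ t i, B (t+1) i = B t i + (1 / n) * ∑ j, I j i * (B t j - B t i))
    (M : ℝ) (s : ℕ) (b : Fin n) :
    M - B (s+1) b =
      (1 / n) * ∑ j, ((1 - I j b) * (M - B s b) + I j b * (M - B s j)) := by
  have hn : (n : ℝ) ≠ 0 := by exact_mod_cast b.pos.ne'
  have hsum : ∑ j, ((1 - I j b) * (M - B s b) + I j b * (M - B s j)) =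
      n * (M - B s b) - ∑ j, I j b * (B s j - B s b) :=
    calc _ = ∑ j, ((M - B s b) - I j b * (B s j - B s b)) :=
          Finset.sum_congr rfl fun j _ => by ring
      _ = _ := by
          rw [Finset.sum_sub_distrib, Finset.sum_const, Finset.card_univ, Fintype.card_fin,
            nsmul_eq_mul]
  rw [hupd, hsum]
  field_simp
  ring

lemma update_le_add_mul (hI : ∀ i j, I i j ∈ Set.Icc (0:ℝ) 1)
    (hupd : ∀ t i, B (t+1) i = B t i + (1 / n) * ∑ j, I j i * (B t j - B t i))
    {M : ℝ} {s : ℕ} (hM : ∀ k, B s k ≤ M) (a b : Fin n) :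
    B (s+1) b ≤ M + (I a b / n) * (B s a - M) := by
  have hterm : ∀ j, I j b * (M - B s j) ≤ (1 - I j b) * (M - B s b) + I j b * (M - B s j) :=
    fun j => le_add_of_nonneg_left <|
      mul_nonneg (sub_nonneg.mpr (hI j b).2) (sub_nonneg.mpr (hM b))
  have hsum : I a b * (M - B s a) ≤
      ∑ j, ((1 - I j b) * (M - B s b) + I j b * (M - B s j)) :=
    (hterm a).trans <| Finset.single_le_sum
      (fun j _ => (mul_nonneg (hI j b).1 (sub_nonneg.mpr (hM j))).trans (hterm j))
      (Finset.mem_univ a)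
  have hgap := sub_update_eq_sum hupd M s b
  have hscaled := mul_le_mul_of_nonneg_left hsum (by positivity : (0 : ℝ) ≤ 1 / n)
  have hrhs : I a b / n * (B s a - M) = -(1 / n * (I a b * (M - B s a))) := by ring
  linarith

lemma update_le (hI : ∀ i j, I i j ∈ Set.Icc (0:ℝ) 1)
    (hupd : ∀ t i, B (t+1) i = B t i + (1 / n) * ∑ j, I j i * (B t j - B t i))
    {M : ℝ} {s : ℕ} (hM : ∀ k, B s k ≤ M) (k : Fin n) : B (s+1) k ≤ M := by
  have hedge := update_le_add_mul hI hupd hM k k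
  have : 0 ≤ I k k / n * (M - B s k) :=
    mul_nonneg (div_nonneg (hI k k).1 (Nat.cast_nonneg n)) (sub_nonneg.mpr (hM k))
  linarith

lemma le_add_pathInfluence_mul (hI : ∀ i j, I i j ∈ Set.Icc (0:ℝ) 1)
    (hupd : ∀ t i, B (t+1) i = B t i + (1 / n) * ∑ j, I j i * (B t j - B t i))
    {M : ℝ} : ∀ {s : ℕ} (l : List (Fin n)) {a b : Fin n}, (∀ k, B s k ≤ M) →
      l.head? = some a → l.getLast? = some b →
      B (s + (l.length - 1)) b ≤ M + (pathInfluence I l / (n : ℝ) ^ (l.length - 1)) * (B s a - M)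
  | _, [], _, _, _, hhead, _ => by simp at hhead
  | _, [c], _, _, _, hhead, hlast => by
      simp only [List.head?_cons, List.getLast?_singleton, Option.some.injEq] at hhead hlast
      subst hhead hlast
      simp
  | s, c :: d :: l, a, b, hM, hhead, hlast => by
      simp only [List.head?_cons, Option.some.injEq] at hhead
      subst hhead
      rw [List.getLast?_cons_cons] at hlast
      have hrest := le_add_pathInfluence_mul hI hupd (s := s + 1) (d :: l)
        (update_le hI hupd hM) rfl hlast
      have hedge := update_le_add_mul hI hupd hM c d
      have hfactor : 0 ≤ pathInfluence I (d :: l) / (n : ℝ) ^ l.length :=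
        div_nonneg (pathInfluence_nonneg (fun i j => (hI i j).1) _) (by positivity)
      simp only [List.length_cons, Nat.add_sub_cancel] at hrest ⊢
      rw [show s + (l.length + 1) = s + 1 + l.length by omega, pathInfluence_cons_cons]
      calc B (s + 1 + l.length) b
          ≤ M + pathInfluence I (d :: l) / (n : ℝ) ^ l.length * (B (s + 1) d - M) := hrest
        _ ≤ M + pathInfluence I (d :: l) / (n : ℝ) ^ l.length * (I c d / n * (B s c - M)) := by
          gcongr
          linarith
        _ = M + I c d * pathInfluence I (d :: l) / (n : ℝ) ^ (l.length + 1) * (B s c - M) := by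
          ring

end

theorem path_bound_general (n : ℕ) (hn : 0 < n)
    (I : Fin n → Fin n → ℝ) (hI : ∀ i j, I i j ∈ Set.Icc (0:ℝ) 1)
    (B : ℕ → Fin n → ℝ)
    (hupd : ∀ t i, B (t+1) i = B t i + (1 / n) * ∑ j, I j i * (B t j - B t i))
    (t : ℕ) (i j : Fin n) (l : List (Fin n))
    (hhead : l.head? = some i) (hlast : l.getLast? = some j) :
    B (t + (l.length - 1)) j ≤
      Finset.univ.sup' ⟨⟨0, hn⟩, Finset.mem_univ _⟩ (B t) +
        (pathInfluence I l / (n : ℝ) ^ (l.length - 1)) *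
          (B t i - Finset.univ.sup' ⟨⟨0, hn⟩, Finset.mem_univ _⟩ (B t)) :=
  le_add_pathInfluence_mul hI hupd l (fun k => Finset.le_sup' (B t) (Finset.mem_univ k))
    hhead hlast

theorem path_bound (n : ℕ) (hn : 0 < n)
    (I : Fin n → Fin n → ℝ) (hI : ∀ i j, I i j ∈ Set.Icc (0:ℝ) 1)
    (B : ℕ → Fin n → ℝ) (hB : ∀ t i, B t i ∈ Set.Icc (0:ℝ) 1)
    (hupd : ∀ t i, B (t+1) i = B t i + (1 / n) * ∑ j, I j i * (B t j - B t i))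
    (t : ℕ) (i j : Fin n) (l : List (Fin n))
    (hpath : IsInfluencePath I l) (hlen : 2 ≤ l.length)
    (hhead : l.head? = some i) (hlast : l.getLast? = some j) :
    B (t + (l.length - 1)) j ≤
      Finset.univ.sup' ⟨⟨0, hn⟩, Finset.mem_univ _⟩ (B t) +
        (pathInfluence I l / (n : ℝ) ^ (l.length - 1)) *
          (B t i - Finset.univ.sup' ⟨⟨0, hn⟩, Finset.mem_univ _⟩ (B t)) :=
  path_bound_general n hn I hI B hupd t i j l hhead hlast
end

section
/- Under the general update rule, if B_i^{t+m} ≤ max^t − γ with γ ≥ 0, then B_i^{t+m+1} ≤ max^t − γ/n, where max^t = max_j B_j^t. -/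
/-!
Let `M` be the largest belief at time `t`. One update moves `B i` towards the other beliefs with
weights `I j i / n ≤ 1 / n`; the term `j = i` vanishes, so at most `n - 1` of the `n` available
shares of the gap `M - B i` are spent, and `B i` stays at least `(M - B i) / n` below `M`.
In particular no belief ever exceeds `M`, so the same bound applies at every later time `t + m`.
-/

open Finset

variable {ι : Type*}

/-- `I j i` is the influence of agent `j` on agent `i`. -/
noncomputable def opinionStep [Fintype ι] (I : ι → ι → ℝ) (x : ι → ℝ) (i : ι) : ℝ :=
  x i + (1 / Fintype.card ι) * ∑ j, I j i * (x j - x i)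

section

variable {I : ι → ι → ℝ} {x : ι → ℝ} {M : ℝ}

lemma influence_mul_sub_le (hI : ∀ i j, I i j ∈ Set.Icc (0 : ℝ) 1) (hx : ∀ k, x k ≤ M)
    (j i : ι) : I j i * (x j - x i) ≤ M - x i :=
  calc I j i * (x j - x i) ≤ I j i * (M - x i) :=
        mul_le_mul_of_nonneg_left (by linarith [hx j]) (hI j i).1
    _ ≤ M - x i := mul_le_of_le_one_left (by linarith [hx i]) (hI j i).2

variable [Fintype ι]

lemma opinionStep_le_sub (hI : ∀ i j, I i j ∈ Set.Icc (0 : ℝ) 1) (hx : ∀ k, x k ≤ M) (i : ι) :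
    opinionStep I x i ≤ M - (M - x i) / Fintype.card ι := by
  classical
  have : Nonempty ι := ⟨i⟩
  have hsum : ∑ j, I j i * (x j - x i) ≤ (Fintype.card ι - 1) * (M - x i) := by
    rw [← sum_erase univ (a := i) (by rw [sub_self, mul_zero])]
    calc ∑ j ∈ univ.erase i, I j i * (x j - x i)
        ≤ #(univ.erase i) • (M - x i) :=
          sum_le_card_nsmul _ _ _ fun j _ => influence_mul_sub_le hI hx j i
      _ = (Fintype.card ι - 1) * (M - x i) := by
          rw [card_erase_of_mem (mem_univ i), card_univ, nsmul_eq_mul,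
            Nat.cast_pred Fintype.card_pos]
  calc opinionStep I x i
      ≤ x i + (1 / Fintype.card ι) * ((Fintype.card ι - 1) * (M - x i)) := by
        unfold opinionStep; gcongr
    _ = M - (M - x i) / Fintype.card ι := by field_simp; ring

lemma opinionStep_le (hI : ∀ i j, I i j ∈ Set.Icc (0 : ℝ) 1) (hx : ∀ k, x k ≤ M) (i : ι) :
    opinionStep I x i ≤ M := by
  have := opinionStep_le_sub hI hx i
  have : 0 ≤ (M - x i) / Fintype.card ι := div_nonneg (by linarith [hx i]) (Nat.cast_nonneg _)
  linarith

lemma opinionStep_orbit_le (hI : ∀ i j, I i j ∈ Set.Icc (0 : ℝ) 1) {B : ℕ → ι → ℝ}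
    (hB : ∀ t, B (t + 1) = opinionStep I (B t)) {t : ℕ} (ht : ∀ k, B t k ≤ M) :
    ∀ s k, B (t + s) k ≤ M
  | 0 => ht
  | s + 1 => by
      rw [← add_assoc, hB]
      exact opinionStep_le hI (opinionStep_orbit_le hI hB ht s)

end

theorem gamma_bound_general (n : ℕ) (hn : 0 < n)
    (I : Fin n → Fin n → ℝ) (hI : ∀ i j, I i j ∈ Set.Icc (0:ℝ) 1)
    (B : ℕ → Fin n → ℝ)
    (hupd : ∀ t i, B (t+1) i = B t i + (1 / n) * ∑ j, I j i * (B t j - B t i))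
    (t m : ℕ) (i : Fin n) (γ : ℝ)
    (h : B (t + m) i ≤ Finset.univ.sup' ⟨⟨0, hn⟩, Finset.mem_univ _⟩ (B t) - γ) :
    B (t + m + 1) i ≤ Finset.univ.sup' ⟨⟨0, hn⟩, Finset.mem_univ _⟩ (B t) - γ / n := by
  set M := Finset.univ.sup' ⟨⟨0, hn⟩, Finset.mem_univ _⟩ (B t)
  have hstep : ∀ s, B (s + 1) = opinionStep I (B s) := fun s => by
    ext j; rw [hupd, opinionStep, Fintype.card_fin]
  have hbounded : ∀ k, B (t + m) k ≤ M :=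
    opinionStep_orbit_le hI hstep (fun k => le_sup' (B t) (mem_univ k)) m
  calc B (t + m + 1) i = opinionStep I (B (t + m)) i := by rw [hstep]
    _ ≤ M - (M - B (t + m) i) / Fintype.card (Fin n) := opinionStep_le_sub hI hbounded i
    _ ≤ M - γ / n := by rw [Fintype.card_fin]; gcongr; linarith

theorem gamma_bound (n : ℕ) (hn : 0 < n)
    (I : Fin n → Fin n → ℝ) (hI : ∀ i j, I i j ∈ Set.Icc (0:ℝ) 1)
    (B : ℕ → Fin n → ℝ) (hB : ∀ t i, B t i ∈ Set.Icc (0:ℝ) 1)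
    (hupd : ∀ t i, B (t+1) i = B t i + (1 / n) * ∑ j, I j i * (B t j - B t i))
    (t m : ℕ) (i : Fin n) (γ : ℝ) (hγ : 0 ≤ γ)
    (h : B (t + m) i ≤ Finset.univ.sup' ⟨⟨0, hn⟩, Finset.mem_univ _⟩ (B t) - γ) :
    B (t + m + 1) i ≤ Finset.univ.sup' ⟨⟨0, hn⟩, Finset.mem_univ _⟩ (B t) - γ / n :=
  gamma_bound_general n hn I hI B hupd t m i γ h
end

section
/- If the influence graph is strongly connected, then all agents' beliefs converge to a common value: for all agents i, j, lim_{t→∞} B_i^t = lim_{t→∞} B_j^t. -/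
/-- Strong connectivity: every agent has an influence path to every other agent. -/
def StronglyConnected {n : ℕ} (I : Fin n → Fin n → ℝ) : Prop :=
  ∀ i j : Fin n, i ≠ j → ∃ l : List (Fin n),
    IsInfluencePath I l ∧ l.head? = some i ∧ l.getLast? = some j

/-!
Write the update as `B^{t+1} = A B^t`. The matrix `A` is row-stochastic with positive diagonal, and
its positive entries contain the influence graph, so the least belief never decreases and the
largest never increases. Along an influence path from `j` to `i`, the excess of `j` over the
current least belief is passed on to `i` with a positive factor, and the positive diagonal lets all
paths be padded to one common length `M`. Hence after `M` steps every agent lies above the old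
minimum by a fixed fraction `c` of the old spread: the spread shrinks by the factor `1 - c` every
`M` steps, tends to `0`, and squeezes all beliefs to the limit of the least belief.
-/

open Finset Filter Topology Matrix Relation

lemma tendsto_zero_of_antitone_of_le_mul {g : ℕ → ℝ} (hg : Antitone g) (hg0 : ∀ t, 0 ≤ g t)
    {q : ℝ} (hq : q < 1) {M : ℕ} (hM : ∀ t, g (t + M) ≤ q * g t) : Tendsto g atTop (𝓝 0) := by
  have hlim : Tendsto g atTop (𝓝 (⨅ t, g t)) :=
    tendsto_atTop_ciInf hg ⟨0, by rintro _ ⟨t, rfl⟩; exact hg0 t⟩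
  have hle : ⨅ t, g t ≤ q * ⨅ t, g t :=
    le_of_tendsto_of_tendsto' ((tendsto_add_atTop_iff_nat M).2 hlim) (hlim.const_mul q) hM
  have hnonneg : 0 ≤ ⨅ t, g t := le_ciInf hg0
  rwa [show ⨅ t, g t = 0 by nlinarith] at hlim

namespace Matrix

variable {ι : Type*} [Fintype ι] [DecidableEq ι] {A : Matrix ι ι ℝ}

lemma mulVec_sub_const_of_mem_rowStochastic (hA : A ∈ rowStochastic ℝ ι) (y : ι → ℝ) (v : ℝ)
    (i : ι) : (A *ᵥ y) i - v = ∑ j, A i j * (y j - v) := by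
  simp only [mulVec, dotProduct, mul_sub, sum_sub_distrib, ← sum_mul,
    sum_row_of_mem_rowStochastic hA, one_mul]

lemma mul_sub_le_mulVec_sub_of_mem_rowStochastic (hA : A ∈ rowStochastic ℝ ι) {y : ι → ℝ}
    {v : ℝ} (hv : ∀ k, v ≤ y k) (i j : ι) : A i j * (y j - v) ≤ (A *ᵥ y) i - v := by
  rw [mulVec_sub_const_of_mem_rowStochastic hA]
  exact single_le_sum (f := fun k => A i k * (y k - v))
    (fun k _ => mul_nonneg (nonneg_of_mem_rowStochastic hA) (sub_nonneg.2 (hv k))) (mem_univ j)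

lemma le_mulVec_of_mem_rowStochastic (hA : A ∈ rowStochastic ℝ ι) {y : ι → ℝ} {v : ℝ}
    (hv : ∀ k, v ≤ y k) (i : ι) : v ≤ (A *ᵥ y) i := by
  rw [← sub_nonneg, mulVec_sub_const_of_mem_rowStochastic hA]
  exact sum_nonneg fun k _ => mul_nonneg (nonneg_of_mem_rowStochastic hA) (sub_nonneg.2 (hv k))

lemma mulVec_le_of_mem_rowStochastic (hA : A ∈ rowStochastic ℝ ι) {y : ι → ℝ} {v : ℝ}
    (hv : ∀ k, y k ≤ v) (i : ι) : (A *ᵥ y) i ≤ v := by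
  have := le_mulVec_of_mem_rowStochastic hA (y := -y) (v := -v) (fun k => neg_le_neg (hv k)) i
  rwa [mulVec_neg, Pi.neg_apply, neg_le_neg_iff] at this

end Matrix

section Iteration

variable {ι : Type*} {x : ℕ → ι → ℝ}

def InfluencesAfter (x : ℕ → ι → ℝ) (m : ℕ) (c : ℝ) (j i : ι) : Prop :=
  ∀ t v, (∀ k, v ≤ x t k) → c * (x t j - v) ≤ x (t + m) i - v

lemma influencesAfter_zero_one_self (i : ι) : InfluencesAfter x 0 1 i i :=
  fun t v _ => by simp

lemma InfluencesAfter.mono_const {m : ℕ} {c c' : ℝ} {j i : ι} (h : InfluencesAfter x m c j i)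
    (hc : c' ≤ c) : InfluencesAfter x m c' j i :=
  fun t v hv => (mul_le_mul_of_nonneg_right hc (sub_nonneg.2 (hv j))).trans (h t v hv)

variable [Fintype ι] [DecidableEq ι] {A : Matrix ι ι ℝ}

lemma le_apply_add_of_forall_le (hA : A ∈ rowStochastic ℝ ι) (hx : ∀ t, x (t + 1) = A *ᵥ x t)
    {t : ℕ} {v : ℝ} (hv : ∀ k, v ≤ x t k) (m : ℕ) (i : ι) : v ≤ x (t + m) i := by
  induction m generalizing i with
  | zero => exact hv i
  | succ m ih => rw [← add_assoc, hx]; exact le_mulVec_of_mem_rowStochastic hA ih i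

lemma InfluencesAfter.succ (hA : A ∈ rowStochastic ℝ ι) (hx : ∀ t, x (t + 1) = A *ᵥ x t)
    {m : ℕ} {c : ℝ} {j k : ι} (h : InfluencesAfter x m c j k) (i : ι) :
    InfluencesAfter x (m + 1) (A i k * c) j i := by
  intro t v hv
  calc A i k * c * (x t j - v) = A i k * (c * (x t j - v)) := mul_assoc _ _ _
    _ ≤ A i k * (x (t + m) k - v) :=
      mul_le_mul_of_nonneg_left (h t v hv) (nonneg_of_mem_rowStochastic hA)
    _ ≤ x (t + (m + 1)) i - v := by
      rw [← add_assoc, hx]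
      exact mul_sub_le_mulVec_sub_of_mem_rowStochastic hA (le_apply_add_of_forall_le hA hx hv m) i k

lemma exists_influencesAfter_of_reflTransGen (hA : A ∈ rowStochastic ℝ ι)
    (hx : ∀ t, x (t + 1) = A *ᵥ x t) {j i : ι} (h : ReflTransGen (fun a b => 0 < A b a) j i) :
    ∃ m, ∃ c > 0, InfluencesAfter x m c j i := by
  induction h with
  | refl => exact ⟨0, 1, one_pos, influencesAfter_zero_one_self j⟩
  | tail _ hki ih =>
    obtain ⟨m, c, hc, h⟩ := ih
    exact ⟨m + 1, _, mul_pos hki hc, h.succ hA hx _⟩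

lemma InfluencesAfter.exists_add (hA : A ∈ rowStochastic ℝ ι) (hx : ∀ t, x (t + 1) = A *ᵥ x t)
    (hdiag : ∀ i, 0 < A i i) {m : ℕ} {c : ℝ} {j i : ι} (h : InfluencesAfter x m c j i)
    (hc : 0 < c) (p : ℕ) : ∃ c' > 0, InfluencesAfter x (m + p) c' j i := by
  induction p with
  | zero => exact ⟨c, hc, h⟩
  | succ p ih =>
    obtain ⟨c', hc', h'⟩ := ih
    exact ⟨_, mul_pos (hdiag i) hc', h'.succ hA hx i⟩

lemma exists_forall_influencesAfter [Nonempty ι] (hA : A ∈ rowStochastic ℝ ι)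
    (hx : ∀ t, x (t + 1) = A *ᵥ x t) (hdiag : ∀ i, 0 < A i i)
    (hconn : ∀ i j, ReflTransGen (fun a b => 0 < A b a) i j) :
    ∃ M, ∃ c > 0, ∀ i j, InfluencesAfter x M c j i := by
  choose m c hc h using fun p : ι × ι =>
    exists_influencesAfter_of_reflTransGen (x := x) hA hx (hconn p.2 p.1)
  obtain ⟨pM, hpM⟩ := Finite.exists_max m
  choose c' hc' h' using fun p : ι × ι => (h p).exists_add hA hx hdiag (hc p) (m pM - m p)
  obtain ⟨p₀, hp₀⟩ := Finite.exists_min c'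
  refine ⟨m pM, c' p₀, hc' p₀, fun i j => ?_⟩
  have := (h' (i, j)).mono_const (hp₀ (i, j))
  rwa [Nat.add_sub_cancel' (hpM (i, j))] at this

lemma monotone_iInf_apply [Nonempty ι] (hA : A ∈ rowStochastic ℝ ι)
    (hx : ∀ t, x (t + 1) = A *ᵥ x t) : Monotone fun t => ⨅ k, x t k :=
  monotone_nat_of_le_succ fun t => le_ciInf fun i => by
    rw [hx]; exact le_mulVec_of_mem_rowStochastic hA (ciInf_le (Finite.bddBelow_range _)) i

lemma antitone_iSup_apply [Nonempty ι] (hA : A ∈ rowStochastic ℝ ι)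
    (hx : ∀ t, x (t + 1) = A *ᵥ x t) : Antitone fun t => ⨆ k, x t k :=
  antitone_nat_of_succ_le fun t => ciSup_le fun i => by
    rw [hx]; exact mulVec_le_of_mem_rowStochastic hA (le_ciSup (Finite.bddAbove_range _)) i

lemma iSup_sub_iInf_add_le_one_sub_mul [Nonempty ι] (hA : A ∈ rowStochastic ℝ ι)
    (hx : ∀ t, x (t + 1) = A *ᵥ x t) {M : ℕ} {c : ℝ} (hM : ∀ i j, InfluencesAfter x M c j i)
    (t : ℕ) :
    (⨆ k, x (t + M) k) - ⨅ k, x (t + M) k ≤ (1 - c) * ((⨆ k, x t k) - ⨅ k, x t k) := by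
  obtain ⟨j, hj⟩ := exists_eq_ciSup_of_finite (f := x t)
  have hlo : (⨅ k, x t k) + c * ((⨆ k, x t k) - ⨅ k, x t k) ≤ ⨅ k, x (t + M) k :=
    le_ciInf fun i => by
      have := hM i j t _ fun k => ciInf_le (Finite.bddBelow_range _) k
      rw [hj] at this
      linarith
  have hhi := antitone_iSup_apply hA hx (Nat.le_add_right t M)
  simp only at hhi
  linarith

theorem exists_tendsto_of_mem_rowStochastic (hA : A ∈ rowStochastic ℝ ι)
    (hdiag : ∀ i, 0 < A i i) (hconn : ∀ i j, ReflTransGen (fun a b => 0 < A b a) i j)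
    (hx : ∀ t, x (t + 1) = A *ᵥ x t) : ∃ c, ∀ i, Tendsto (fun t => x t i) atTop (𝓝 c) := by
  cases isEmpty_or_nonempty ι with
  | inl _ => exact ⟨0, isEmptyElim⟩
  | inr _ =>
  set lo := fun t => ⨅ k, x t k
  set hi := fun t => ⨆ k, x t k
  have hlo : Monotone lo := monotone_iInf_apply hA hx
  have hhi : Antitone hi := antitone_iSup_apply hA hx
  have hlo_le_hi : ∀ t, lo t ≤ hi t := fun t =>
    ciInf_le_ciSup (Finite.bddBelow_range _) (Finite.bddAbove_range _)
  obtain ⟨M, c, hc, hM⟩ := exists_forall_influencesAfter hA hx hdiag hconn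
  have hgap : Tendsto (hi - lo) atTop (𝓝 0) :=
    tendsto_zero_of_antitone_of_le_mul (fun a b hab => sub_le_sub (hhi hab) (hlo hab))
      (fun t => sub_nonneg.2 (hlo_le_hi t)) (by linarith : 1 - c < 1)
      (iSup_sub_iInf_add_le_one_sub_mul hA hx hM)
  have hlim : Tendsto lo atTop (𝓝 (⨆ t, lo t)) :=
    tendsto_atTop_ciSup hlo ⟨hi 0, by
      rintro _ ⟨t, rfl⟩; exact (hlo_le_hi t).trans (hhi (Nat.zero_le t))⟩
  refine ⟨⨆ t, lo t, fun i => tendsto_of_tendsto_of_tendsto_of_le_of_le hlim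
    (by simpa using hlim.add hgap) (fun t => ciInf_le (Finite.bddBelow_range _) i) fun t => ?_⟩
  simpa using le_ciSup (Finite.bddAbove_range (x t)) i

end Iteration

section UpdateMatrix

variable {ι : Type*} [Fintype ι] [DecidableEq ι] {h : ℝ} {W : Matrix ι ι ℝ}

def updateMatrix (h : ℝ) (W : Matrix ι ι ℝ) : Matrix ι ι ℝ :=
  1 + h • (Wᵀ - diagonal fun i => ∑ k, W k i)

lemma updateMatrix_mulVec (y : ι → ℝ) (i : ι) :
    (updateMatrix h W *ᵥ y) i = y i + h * ∑ j, W j i * (y j - y i) := by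
  rw [updateMatrix, add_mulVec, one_mulVec, smul_mulVec, sub_mulVec, mulVec_transpose]
  simp only [Pi.add_apply, Pi.smul_apply, Pi.sub_apply, mulVec_diagonal, smul_eq_mul, vecMul,
    dotProduct, mul_sub, sum_sub_distrib, ← sum_mul, mul_comm (y _)]

lemma updateMatrix_apply_of_ne {i j : ι} (hij : i ≠ j) : updateMatrix h W i j = h * W j i := by
  simp [updateMatrix, hij]

lemma updateMatrix_apply_self (i : ι) :
    updateMatrix h W i i = 1 - h * ∑ k ∈ univ.erase i, W k i := by
  rw [updateMatrix, Matrix.add_apply, Matrix.smul_apply, Matrix.sub_apply, one_apply_eq,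
    transpose_apply, diagonal_apply_eq, smul_eq_mul, ← add_sum_erase univ _ (mem_univ i)]
  ring

lemma updateMatrix_apply_self_pos (hW : ∀ j i, W j i ∈ Set.Icc 0 1) (i : ι) :
    0 < updateMatrix (1 / Fintype.card ι) W i i := by
  have hcard : (0 : ℝ) < Fintype.card ι := Nat.cast_pos.2 (Fintype.card_pos_iff.2 ⟨i⟩)
  have hsum : ∑ k ∈ univ.erase i, W k i < Fintype.card ι :=
    calc ∑ k ∈ univ.erase i, W k i ≤ #(univ.erase i) :=
          (sum_le_card_nsmul _ _ 1 fun k _ => (hW k i).2).trans_eq (nsmul_one _)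
      _ < Fintype.card ι := by exact_mod_cast card_erase_lt_of_mem (mem_univ i)
  rwa [updateMatrix_apply_self, sub_pos, one_div_mul_eq_div, div_lt_one hcard]

lemma updateMatrix_pos_of_pos (hW : ∀ j i, W j i ∈ Set.Icc 0 1) {i j : ι} (hji : 0 < W j i) :
    0 < updateMatrix (1 / Fintype.card ι) W i j := by
  rcases eq_or_ne i j with rfl | hij
  · exact updateMatrix_apply_self_pos hW i
  · have hcard : (0 : ℝ) < Fintype.card ι := Nat.cast_pos.2 (Fintype.card_pos_iff.2 ⟨i⟩)
    rw [updateMatrix_apply_of_ne hij]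
    exact mul_pos (by positivity) hji

lemma updateMatrix_mem_rowStochastic (hW : ∀ j i, W j i ∈ Set.Icc 0 1) :
    updateMatrix (1 / Fintype.card ι) W ∈ rowStochastic ℝ ι := by
  refine mem_rowStochastic.2 ⟨fun i j => ?_, funext fun i => by simp [updateMatrix_mulVec]⟩
  rcases eq_or_ne i j with rfl | hij
  · exact (updateMatrix_apply_self_pos hW i).le
  · rw [updateMatrix_apply_of_ne hij]
    exact mul_nonneg (by positivity) (hW j i).1

end UpdateMatrix

lemma StronglyConnected.reflTransGen {n : ℕ} {I : Fin n → Fin n → ℝ} (hI : StronglyConnected I)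
    (i j : Fin n) : ReflTransGen (fun a b => 0 < I a b) i j := by
  rcases eq_or_ne i j with rfl | hij
  · exact .refl
  obtain ⟨l, ⟨-, hl⟩, hhead, hlast⟩ := hI i j hij
  have hne : l ≠ [] := by rintro rfl; simp at hhead
  have := List.relationReflTransGen_of_exists_isChain l hl hne
  rwa [(List.head_eq_iff_head?_eq_some hne).2 hhead,
    (List.getLast_eq_iff_getLast?_eq_some hne).2 hlast] at this

theorem belief_consensus_general (n : ℕ)
    (I : Fin n → Fin n → ℝ) (hI : ∀ i j, I i j ∈ Set.Icc (0:ℝ) 1)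
    (hsc : StronglyConnected I)
    (B : ℕ → Fin n → ℝ)
    (hupd : ∀ t i, B (t+1) i = B t i + (1 / n) * ∑ j, I j i * (B t j - B t i)) :
    ∃ c : ℝ, ∀ i : Fin n,
      Filter.Tendsto (fun t => B t i) Filter.atTop (nhds c) := by
  have hstep : (1 / n : ℝ) = 1 / Fintype.card (Fin n) := by rw [Fintype.card_fin]
  rw [hstep] at hupd
  refine exists_tendsto_of_mem_rowStochastic (updateMatrix_mem_rowStochastic (W := of I) hI)
    (updateMatrix_apply_self_pos hI)
    (fun i j => ReflTransGen.mono (fun _ _ => updateMatrix_pos_of_pos hI) i j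
      (hsc.reflTransGen i j))
    fun t => funext fun i => ?_
  rw [hupd]
  exact (updateMatrix_mulVec _ _).symm

theorem belief_consensus (n : ℕ) (hn : 0 < n)
    (I : Fin n → Fin n → ℝ) (hI : ∀ i j, I i j ∈ Set.Icc (0:ℝ) 1)
    (hsc : StronglyConnected I)
    (B : ℕ → Fin n → ℝ) (hB : ∀ t i, B t i ∈ Set.Icc (0:ℝ) 1)
    (hupd : ∀ t i, B (t+1) i = B t i + (1 / n) * ∑ j, I j i * (B t j - B t i)) :
    ∃ c : ℝ, ∀ i : Fin n,
      Filter.Tendsto (fun t => B t i) Filter.atTop (nhds c) :=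
  belief_consensus_general n I hI hsc B hupd
end

section
/- If the influence graph I is balanced and I(i,j) > 0 for some agents i, j, then there exists an influence path from j back to i. Consequently, a balanced influence graph that is weakly connected is strongly connected. -/
/-- Weak connectivity: the undirected graph with an edge between `i` and `j`
whenever `I i j > 0` or `I j i > 0` is connected. -/
def WeaklyConnected {n : ℕ} (I : Fin n → Fin n → ℝ) : Prop :=
  ∀ i j : Fin n, Relation.ReflTransGen (fun a b => 0 < I a b ∨ 0 < I b a) i j

open Finset Relation

theorem List.exists_nodup_isChain_of_reflTransGen {α : Type*} {r : α → α → Prop} {a b : α}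
    (h : ReflTransGen r a b) :
    ∃ l : List α, l.Nodup ∧ l.IsChain r ∧ l.head? = some a ∧ l.getLast? = some b := by
  induction h using ReflTransGen.head_induction_on with
  | refl => exact ⟨[b], nodup_singleton b, isChain_singleton b, rfl, rfl⟩
  | @head a c hac _ ih =>
    obtain ⟨l, hnd, hch, hhd, hlast⟩ := ih
    by_cases ha : a ∈ l
    · -- a cycle through `a`: keep only the part of the walk after it
      obtain ⟨s, t, rfl⟩ := append_of_mem ha
      refine ⟨a :: t, hnd.sublist (sublist_append_right s _), hch.suffix ⟨s, rfl⟩, rfl, ?_⟩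
      rwa [getLast?_append_of_ne_nil _ (cons_ne_nil a t)] at hlast
    · rcases l with _ | ⟨c', l'⟩
      · simp at hhd
      obtain rfl : c' = c := by simpa using hhd
      exact ⟨a :: c' :: l', nodup_cons.2 ⟨ha, hnd⟩, hch.cons_cons hac, rfl, by simpa using hlast⟩

section Balanced

variable {ι M : Type*} [Fintype ι] [AddCommGroup M] {f : ι → ι → M}

theorem Finset.sum_sum_compl_eq_of_balanced [DecidableEq ι]
    (hbal : ∀ i, ∑ j, f i j = ∑ j, f j i) (S : Finset ι) :
    ∑ a ∈ S, ∑ b ∈ Sᶜ, f a b = ∑ a ∈ S, ∑ b ∈ Sᶜ, f b a := by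
  have hsplit : ∑ a ∈ S, ∑ b ∈ S, f a b + ∑ a ∈ S, ∑ b ∈ Sᶜ, f a b
      = ∑ a ∈ S, ∑ b ∈ S, f b a + ∑ a ∈ S, ∑ b ∈ Sᶜ, f b a := by
    simp only [← sum_add_distrib, sum_add_sum_compl]
    exact sum_congr rfl fun a _ => hbal a
  rwa [sum_comm (s := S) (t := S) (f := fun a b => f b a), add_right_inj] at hsplit

variable [PartialOrder M] [IsOrderedAddMonoid M]

theorem eq_zero_of_balanced_of_forall_out_eq_zero [DecidableEq ι] (hf : ∀ i j, 0 ≤ f i j)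
    (hbal : ∀ i, ∑ j, f i j = ∑ j, f j i) {S : Finset ι}
    (hout : ∀ a ∈ S, ∀ b ∉ S, f a b = 0) {a b : ι} (ha : a ∈ S) (hb : b ∉ S) : f b a = 0 := by
  have hin : ∑ a ∈ S, ∑ b ∈ Sᶜ, f b a = 0 := by
    rw [← sum_sum_compl_eq_of_balanced hbal S]
    exact sum_eq_zero fun a ha => sum_eq_zero fun b hb => hout a ha b (mem_compl.1 hb)
  rw [sum_eq_zero_iff_of_nonneg fun a _ => sum_nonneg fun b _ => hf b a] at hin
  exact (sum_eq_zero_iff_of_nonneg fun b _ => hf b a).1 (hin a ha) b (mem_compl.2 hb)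

theorem reflTransGen_swap_of_balanced (hf : ∀ i j, 0 ≤ f i j)
    (hbal : ∀ i, ∑ j, f i j = ∑ j, f j i) {i j : ι} (hij : 0 < f i j) :
    ReflTransGen (fun a b => 0 < f a b) j i := by
  classical
  set S := univ.filter (ReflTransGen (fun a b => 0 < f a b) j)
  have hout : ∀ a ∈ S, ∀ b ∉ S, f a b = 0 := by
    intro a ha b hb
    by_contra hab
    simp only [S, mem_filter, mem_univ, true_and] at ha hb
    exact hb (ha.tail ((hf a b).lt_of_ne' hab))
  by_contra hi
  have hjS : j ∈ S := mem_filter.2 ⟨mem_univ j, .refl⟩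
  exact hij.ne' (eq_zero_of_balanced_of_forall_out_eq_zero hf hbal hout hjS (by simpa [S]))

end Balanced

theorem exists_isInfluencePath_of_reflTransGen {n : ℕ} {I : Fin n → Fin n → ℝ} {a b : Fin n}
    (h : ReflTransGen (fun a b => 0 < I a b) a b) :
    ∃ l : List (Fin n), IsInfluencePath I l ∧ l.head? = some a ∧ l.getLast? = some b := by
  obtain ⟨l, hnd, hch, hhd, hlast⟩ := List.exists_nodup_isChain_of_reflTransGen h
  exact ⟨l, ⟨hnd, hch⟩, hhd, hlast⟩

theorem balanced_weakly_connected_general (n : ℕ)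
    (I : Fin n → Fin n → ℝ) (hI : ∀ i j, I i j ∈ Set.Icc (0:ℝ) 1)
    (hbal : ∀ i : Fin n, ∑ j, I i j = ∑ j, I j i) :
    (∀ i j : Fin n, 0 < I i j → ∃ l : List (Fin n),
        IsInfluencePath I l ∧ l.head? = some j ∧ l.getLast? = some i) ∧
    (WeaklyConnected I → StronglyConnected I) := by
  have hreverse : ∀ {i j}, 0 < I i j → ReflTransGen (fun a b => 0 < I a b) j i :=
    reflTransGen_swap_of_balanced (fun i j => (hI i j).1) hbal
  refine ⟨fun i j hij => exists_isInfluencePath_of_reflTransGen (hreverse hij),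
    fun hwc i j _ => exists_isInfluencePath_of_reflTransGen ?_⟩
  exact reflTransGen_closed (fun a b hab => hab.elim (fun h => .single h) hreverse) i j (hwc i j)

theorem balanced_weakly_connected (n : ℕ) (hn : 0 < n)
    (I : Fin n → Fin n → ℝ) (hI : ∀ i j, I i j ∈ Set.Icc (0:ℝ) 1)
    (hbal : ∀ i : Fin n, ∑ j, I i j = ∑ j, I j i) :
    (∀ i j : Fin n, 0 < I i j → ∃ l : List (Fin n),
        IsInfluencePath I l ∧ l.head? = some j ∧ l.getLast? = some i) ∧
    (WeaklyConnected I → StronglyConnected I) :=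
  balanced_weakly_connected_general n I hI hbal
end

section
/- Under the confirmation-bias update in a strongly connected influence graph: if some agent k has B_k^0 ∉ {0,1}, then all agents' beliefs converge to a common value (for all i, j, lim_{t→∞} B_i^t = lim_{t→∞} B_j^t); otherwise (all initial beliefs are 0 or 1) every agent's belief is constant in time. -/
/-!
One update step writes every new belief as a convex combination of the current beliefs, in which
agent `i` keeps weight at least `1 / n` on its own belief and puts weight
`(1 - |B_j - B_i|) I(j,i) / n` on each influencer `j`. Hence the minimum belief `m` never
decreases and the maximum `M` never increases. A belief strictly inside `(0, 1)` stays there and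
pulls every agent it influences inside, so by strong connectivity all beliefs lie in `(0, 1)` after
`n` steps. From then on `M - m < 1`, so every weight along an influence edge is at least a fixed
`δ > 0`; the distance below `M` of a minimising agent spreads along influence paths losing at most
a factor `δ` per step, and after `n` more steps `M - m` has shrunk by the factor `1 - δ ^ n`.
Thus `M - m → 0` and all beliefs converge to the limit of `M`. If all beliefs are `0` or `1`,
every summand of the update vanishes.
-/

open Finset Filter Topology

theorem tendsto_zero_of_antitone_of_eventually_le_mul {g : ℕ → ℝ} (hg : Antitone g)
    (hg0 : ∀ t, 0 ≤ g t) {ρ : ℝ} (hρ : ρ < 1) {q : ℕ}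
    (hq : ∀ᶠ t in atTop, g (t + q) ≤ ρ * g t) : Tendsto g atTop (𝓝 0) := by
  have hL := tendsto_atTop_ciInf hg ⟨0, by rintro _ ⟨t, rfl⟩; exact hg0 t⟩
  have hL0 : 0 ≤ ⨅ t, g t := le_ciInf hg0
  have hLρ : ⨅ t, g t ≤ ρ * ⨅ t, g t :=
    le_of_tendsto_of_tendsto (hL.comp (tendsto_add_atTop_nat q)) (hL.const_mul ρ) hq
  rwa [show ⨅ t, g t = 0 by nlinarith] at hL

theorem exists_forall_tendsto_of_squeeze {ι : Type*} [Nonempty ι] {x : ℕ → ι → ℝ}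
    {m M : ℕ → ℝ} (hm : Monotone m) (hM : Antitone M) (hmx : ∀ t i, m t ≤ x t i)
    (hxM : ∀ t i, x t i ≤ M t) (hgap : Tendsto (fun t => M t - m t) atTop (𝓝 0)) :
    ∃ c, ∀ i, Tendsto (fun t => x t i) atTop (𝓝 c) := by
  obtain ⟨i₀⟩ := ‹Nonempty ι›
  have hMc : Tendsto M atTop (𝓝 (⨅ t, M t)) := tendsto_atTop_ciInf hM
    ⟨m 0, by rintro _ ⟨t, rfl⟩; exact (hm t.zero_le).trans ((hmx t i₀).trans (hxM t i₀))⟩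
  have hmc : Tendsto m atTop (𝓝 (⨅ t, M t)) := by simpa using hMc.sub hgap
  exact ⟨_, fun i => tendsto_of_tendsto_of_tendsto_of_le_of_le hmc hMc (hmx · i) (hxM · i)⟩

theorem List.IsChain.propagate {α : Type*} {r : α → α → Prop} {P : ℕ → α → Prop}
    (hP : ∀ s a b, r a b → P s a → P (s + 1) b) :
    ∀ {l : List α} {a b : α}, l.IsChain r → l.head? = some a → l.getLast? = some b →
      ∀ s, P s a → P (s + (l.length - 1)) b
  | [], _, _, _, ha, _, _, _ => by simp at ha
  | [c], a, b, _, ha, hb, s, hs => by simp_all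
  | c :: d :: l, a, b, hl, ha, hb, s, hs => by
    obtain rfl : c = a := by simpa using ha
    rw [List.isChain_cons_cons] at hl
    have := List.IsChain.propagate hP hl.2 rfl (by simpa using hb) (s + 1) (hP s c d hl.1 hs)
    simpa [Nat.add_assoc, Nat.add_comm 1] using this

theorem StronglyConnected.propagate {n : ℕ} {I : Fin n → Fin n → ℝ} (hsc : StronglyConnected I)
    {P : ℕ → Fin n → Prop} (hP : ∀ s a b, (a = b ∨ 0 < I a b) → P s a → P (s + 1) b)
    {s : ℕ} {a : Fin n} (ha : P s a) (b : Fin n) : P (s + n) b := by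
  have hstay : ∀ {s c} d, P s c → P (s + d) c := fun d h => by
    induction d with
    | zero => exact h
    | succ d ih => exact hP _ _ _ (Or.inl rfl) ih
  by_cases hab : a = b
  · exact hab ▸ hstay n ha
  obtain ⟨l, ⟨hnodup, hl⟩, hhead, hlast⟩ := hsc a b hab
  have hlen : l.length ≤ n := by simpa using hnodup.length_le_card
  have := hstay (n - (l.length - 1))
    (hl.propagate (fun s a b hab => hP s a b (Or.inr hab)) hhead hlast s ha)
  rwa [Nat.add_assoc, Nat.add_sub_cancel' (by omega)] at this

theorem exists_pos_le_of_pos {α : Type*} [Finite α] [Nonempty α] (f : α → ℝ) :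
    ∃ ε > 0, ∀ a, 0 < f a → ε ≤ f a := by
  classical
  obtain ⟨a₀, ha₀⟩ := Finite.exists_min fun a => if 0 < f a then f a else 1
  refine ⟨if 0 < f a₀ then f a₀ else 1, by split_ifs <;> simp_all, fun a ha => ?_⟩
  simpa [ha] using ha₀ a

noncomputable def weightedPull {ι : Type*} [Fintype ι] (a x : ι → ℝ) (i : ι) : ℝ :=
  x i + ∑ j, a j * (x j - x i)

section WeightedPull

variable {ι : Type*} [Fintype ι] {a x : ι → ℝ}

theorem weightedPull_sub (c : ℝ) (i : ι) :
    weightedPull a x i - c = (1 - ∑ j, a j) * (x i - c) + ∑ j, a j * (x j - c) := by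
  have h : ∀ y : ℝ, ∑ j, a j * (x j - y) = ∑ j, a j * x j - (∑ j, a j) * y := fun y => by
    simp only [mul_sub, sum_sub_distrib, sum_mul]
  rw [weightedPull, h, h]
  ring

theorem weightedPull_neg (i : ι) : weightedPull a (-x) i = -weightedPull a x i := by
  simp only [weightedPull, Pi.neg_apply, neg_sub_neg, neg_add, ← sum_neg_distrib]
  congr 1
  exact sum_congr rfl fun j _ => by ring

theorem mul_sub_le_weightedPull_sub (ha : ∀ j, 0 ≤ a j) (hsum : ∑ j, a j ≤ 1) {m : ℝ}
    (hm : ∀ j, m ≤ x j) (i k : ι) : a k * (x k - m) ≤ weightedPull a x i - m := by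
  have hself : 0 ≤ (1 - ∑ j, a j) * (x i - m) := mul_nonneg (by linarith) (by linarith [hm i])
  have hk : a k * (x k - m) ≤ ∑ j, a j * (x j - m) :=
    single_le_sum (f := fun j => a j * (x j - m))
      (fun j _ => mul_nonneg (ha j) (sub_nonneg.2 (hm j))) (mem_univ k)
  rw [weightedPull_sub]
  linarith

theorem mul_sub_le_sub_weightedPull (ha : ∀ j, 0 ≤ a j) (hsum : ∑ j, a j ≤ 1) {M : ℝ}
    (hM : ∀ j, x j ≤ M) (i k : ι) : a k * (M - x k) ≤ M - weightedPull a x i := by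
  have := mul_sub_le_weightedPull_sub (x := -x) ha hsum (m := -M)
    (fun j => neg_le_neg (hM j)) i k
  rw [weightedPull_neg] at this
  simpa [sub_eq_add_neg, add_comm] using this

end WeightedPull

namespace ConfirmationBias

variable {n : ℕ} {I : Fin n → Fin n → ℝ} {x : Fin n → ℝ}

noncomputable def step (I : Fin n → Fin n → ℝ) (x : Fin n → ℝ) (i : Fin n) : ℝ :=
  x i + (1 / n) * ∑ j, (1 - |x j - x i|) * I j i * (x j - x i)

/-- The `j = i` summand of `step` vanishes, so its coefficient is free; choosing `1 / n` makes
every agent keep weight at least `1 / n` on its own belief. -/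
noncomputable def weight (I : Fin n → Fin n → ℝ) (x : Fin n → ℝ) (i j : Fin n) : ℝ :=
  if j = i then 1 / n else (1 - |x j - x i|) * I j i / n

theorem step_eq_weightedPull (i : Fin n) : step I x i = weightedPull (weight I x i) x i := by
  simp only [step, weightedPull, weight, mul_sum]
  congr 1
  refine sum_congr rfl fun j _ => ?_
  split_ifs with h
  · simp [h]
  · ring

theorem weight_nonneg (hI : ∀ i j, I i j ∈ Set.Icc (0:ℝ) 1) (hx : ∀ j, x j ∈ Set.Icc (0:ℝ) 1)
    (i j : Fin n) : 0 ≤ weight I x i j := by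
  have habs := abs_sub_le_of_nonneg_of_le (hx j).1 (hx j).2 (hx i).1 (hx i).2
  unfold weight
  split_ifs
  · positivity
  · exact div_nonneg (mul_nonneg (by linarith) (hI j i).1) n.cast_nonneg

theorem sum_weight_le_one (hI : ∀ i j, I i j ∈ Set.Icc (0:ℝ) 1) (i : Fin n) :
    ∑ j, weight I x i j ≤ 1 := by
  have hn : (0 : ℝ) < n := Nat.cast_pos.2 i.pos
  have hle : ∀ j, weight I x i j ≤ 1 / n := fun j => by
    unfold weight
    split_ifs
    · rfl
    · exact div_le_div_of_nonneg_right (mul_le_one₀ (by linarith [abs_nonneg (x j - x i)])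
        (hI j i).1 (hI j i).2) n.cast_nonneg
  calc ∑ j, weight I x i j ≤ ∑ _j : Fin n, 1 / (n : ℝ) := sum_le_sum fun j _ => hle j
    _ = 1 := by simp [hn.ne']

theorem weight_pos (i : Fin n) {k : Fin n} (hk : k = i ∨ 0 < I k i) (habs : |x k - x i| < 1) :
    0 < weight I x i k := by
  have hn : (0 : ℝ) < n := Nat.cast_pos.2 i.pos
  unfold weight
  split_ifs with h
  · positivity
  · exact div_pos (mul_pos (by linarith) (hk.resolve_left h)) hn

theorem mul_div_le_weight {φ ι : ℝ} (hφ0 : 0 ≤ φ) (hφ1 : φ ≤ 1) (hι0 : 0 ≤ ι) (hι1 : ι ≤ 1)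
    {i k : Fin n} (hk : k = i ∨ ι ≤ I k i) (habs : |x k - x i| ≤ 1 - φ) :
    φ * ι / n ≤ weight I x i k := by
  unfold weight
  split_ifs with h
  · exact div_le_div_of_nonneg_right (mul_le_one₀ hφ1 hι0 hι1) n.cast_nonneg
  · exact div_le_div_of_nonneg_right
      (mul_le_mul (by linarith) (hk.resolve_left h) hι0 (by linarith)) n.cast_nonneg

theorem weight_mul_sub_le_step_sub (hI : ∀ i j, I i j ∈ Set.Icc (0:ℝ) 1)
    (hx : ∀ j, x j ∈ Set.Icc (0:ℝ) 1) {m : ℝ} (hm : ∀ j, m ≤ x j) (i k : Fin n) :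
    weight I x i k * (x k - m) ≤ step I x i - m := by
  rw [step_eq_weightedPull]
  exact mul_sub_le_weightedPull_sub (weight_nonneg hI hx i) (sum_weight_le_one hI i) hm i k

theorem weight_mul_sub_le_sub_step (hI : ∀ i j, I i j ∈ Set.Icc (0:ℝ) 1)
    (hx : ∀ j, x j ∈ Set.Icc (0:ℝ) 1) {M : ℝ} (hM : ∀ j, x j ≤ M) (i k : Fin n) :
    weight I x i k * (M - x k) ≤ M - step I x i := by
  rw [step_eq_weightedPull]
  exact mul_sub_le_sub_weightedPull (weight_nonneg hI hx i) (sum_weight_le_one hI i) hM i k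

theorem le_step (hI : ∀ i j, I i j ∈ Set.Icc (0:ℝ) 1)
    (hx : ∀ j, x j ∈ Set.Icc (0:ℝ) 1) {m : ℝ} (hm : ∀ j, m ≤ x j) (i : Fin n) :
    m ≤ step I x i := by
  have := weight_mul_sub_le_step_sub hI hx hm i i
  nlinarith [weight_nonneg hI hx i i, hm i]

theorem step_le (hI : ∀ i j, I i j ∈ Set.Icc (0:ℝ) 1)
    (hx : ∀ j, x j ∈ Set.Icc (0:ℝ) 1) {M : ℝ} (hM : ∀ j, x j ≤ M) (i : Fin n) :
    step I x i ≤ M := by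
  have := weight_mul_sub_le_sub_step hI hx hM i i
  nlinarith [weight_nonneg hI hx i i, hM i]

theorem step_mem_Ioo (hI : ∀ i j, I i j ∈ Set.Icc (0:ℝ) 1)
    (hx : ∀ j, x j ∈ Set.Icc (0:ℝ) 1) {i k : Fin n} (hk : k = i ∨ 0 < I k i)
    (hxk : x k ∈ Set.Ioo (0:ℝ) 1) : step I x i ∈ Set.Ioo (0:ℝ) 1 := by
  have hw := weight_pos i hk
    (abs_sub_lt_iff.2 ⟨by linarith [(hx i).1, hxk.2], by linarith [(hx i).2, hxk.1]⟩)
  have h0 := weight_mul_sub_le_step_sub hI hx (fun j => (hx j).1) i k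
  have h1 := weight_mul_sub_le_sub_step hI hx (fun j => (hx j).2) i k
  constructor <;> nlinarith [hxk.1, hxk.2]

theorem mul_sub_le_sub_step (hI : ∀ i j, I i j ∈ Set.Icc (0:ℝ) 1)
    (hx : ∀ j, x j ∈ Set.Icc (0:ℝ) 1) {m M φ ι : ℝ} (hm : ∀ j, m ≤ x j) (hM : ∀ j, x j ≤ M)
    (hgap : M - m ≤ 1 - φ) (hφ0 : 0 ≤ φ) (hφ1 : φ ≤ 1) (hι0 : 0 ≤ ι) (hι1 : ι ≤ 1)
    {i k : Fin n} (hk : k = i ∨ ι ≤ I k i) :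
    φ * ι / n * (M - x k) ≤ M - step I x i := by
  have habs : |x k - x i| ≤ 1 - φ :=
    abs_sub_le_iff.2 ⟨by linarith [hM k, hm i], by linarith [hM i, hm k]⟩
  exact (mul_le_mul_of_nonneg_right (mul_div_le_weight hφ0 hφ1 hι0 hι1 hk habs)
    (sub_nonneg.2 (hM k))).trans (weight_mul_sub_le_sub_step hI hx hM i k)

theorem step_eq_self (h : ∀ j, x j = 0 ∨ x j = 1) : step I x = x := by
  funext i
  rw [step, add_eq_left]
  refine mul_eq_zero_of_right _ (sum_eq_zero fun j _ => ?_)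
  rcases h i with hi | hi <;> rcases h j with hj | hj <;> simp [hi, hj]

variable {B : ℕ → Fin n → ℝ}

theorem monotone_iInf [Nonempty (Fin n)] (hI : ∀ i j, I i j ∈ Set.Icc (0:ℝ) 1)
    (hB : ∀ t i, B t i ∈ Set.Icc (0:ℝ) 1) (hstep : ∀ t, B (t + 1) = step I (B t)) :
    Monotone fun t => ⨅ j, B t j :=
  monotone_nat_of_le_succ fun t => le_ciInf fun i => by
    rw [hstep]
    exact le_step hI (hB t) (fun j => ciInf_le (Finite.bddBelow_range _) j) i

theorem antitone_iSup [Nonempty (Fin n)] (hI : ∀ i j, I i j ∈ Set.Icc (0:ℝ) 1)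
    (hB : ∀ t i, B t i ∈ Set.Icc (0:ℝ) 1) (hstep : ∀ t, B (t + 1) = step I (B t)) :
    Antitone fun t => ⨆ j, B t j :=
  antitone_nat_of_succ_le fun t => ciSup_le fun i => by
    rw [hstep]
    exact step_le hI (hB t) (fun j => le_ciSup (Finite.bddAbove_range _) j) i

theorem mem_Ioo_of_mem_Ioo (hI : ∀ i j, I i j ∈ Set.Icc (0:ℝ) 1)
    (hB : ∀ t i, B t i ∈ Set.Icc (0:ℝ) 1) (hstep : ∀ t, B (t + 1) = step I (B t))
    (hsc : StronglyConnected I) {s : ℕ} {k : Fin n} (hk : B s k ∈ Set.Ioo (0:ℝ) 1) (i : Fin n) :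
    B (s + n) i ∈ Set.Ioo (0:ℝ) 1 :=
  StronglyConnected.propagate hsc (P := fun s j => B s j ∈ Set.Ioo (0:ℝ) 1)
    (fun s _ _ hab ha => hstep s ▸ step_mem_Ioo hI (hB s) hab ha) hk i

theorem iSup_sub_iInf_le [Nonempty (Fin n)] (hI : ∀ i j, I i j ∈ Set.Icc (0:ℝ) 1)
    (hB : ∀ t i, B t i ∈ Set.Icc (0:ℝ) 1) (hstep : ∀ t, B (t + 1) = step I (B t))
    (hsc : StronglyConnected I) {φ ι : ℝ} (hφ0 : 0 ≤ φ) (hφ1 : φ ≤ 1) (hι0 : 0 ≤ ι)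
    (hι1 : ι ≤ 1) (hι : ∀ a b, 0 < I a b → ι ≤ I a b) {T : ℕ}
    (hgap : (⨆ j, B T j) - ⨅ j, B T j ≤ 1 - φ) :
    (⨆ j, B (T + n) j) - ⨅ j, B (T + n) j
      ≤ (1 - (φ * ι / n) ^ n) * ((⨆ j, B T j) - ⨅ j, B T j) := by
  obtain ⟨i₀, hi₀⟩ := exists_eq_ciInf_of_finite (f := B T)
  set M := ⨆ j, B T j
  set m := ⨅ j, B T j
  set δ := φ * ι / n
  have hm : ∀ s j, m ≤ B (T + s) j := fun s j =>
    (monotone_iInf hI hB hstep (T.le_add_right s)).trans (ciInf_le (Finite.bddBelow_range _) j)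
  have hM : ∀ s j, B (T + s) j ≤ M := fun s j =>
    (le_ciSup (Finite.bddAbove_range _) j).trans (antitone_iSup hI hB hstep (T.le_add_right s))
  have hspread : ∀ j, δ ^ n * (M - m) ≤ M - B (T + n) j := by
    intro j
    refine zero_add n ▸ StronglyConnected.propagate hsc
      (P := fun s j => δ ^ s * (M - m) ≤ M - B (T + s) j)
      (fun s a b hab ha => ?_) (a := i₀) (by simp [hi₀]) j
    have hδ : 0 ≤ δ := by positivity
    have := mul_sub_le_sub_step hI (hB (T + s)) (hm s) (hM s) hgap hφ0 hφ1 hι0 hι1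
      (hab.imp_right (hι a b))
    rw [← Nat.add_assoc, hstep, pow_succ', mul_assoc]
    exact (mul_le_mul_of_nonneg_left ha hδ).trans this
  have hM' : (⨆ j, B (T + n) j) ≤ M - δ ^ n * (M - m) := ciSup_le fun j => by linarith [hspread j]
  have hm' : m ≤ ⨅ j, B (T + n) j := le_ciInf (hm n)
  linarith

theorem forall_eq_zero_or_eq_one (hstep : ∀ t, B (t + 1) = step I (B t))
    (h₀ : ∀ k, B 0 k = 0 ∨ B 0 k = 1) (t : ℕ) : ∀ k, B t k = 0 ∨ B t k = 1 := by
  induction t with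
  | zero => exact h₀
  | succ t ih => rwa [hstep, step_eq_self ih]

theorem exists_forall_tendsto [Nonempty (Fin n)] (hI : ∀ i j, I i j ∈ Set.Icc (0:ℝ) 1)
    (hB : ∀ t i, B t i ∈ Set.Icc (0:ℝ) 1) (hstep : ∀ t, B (t + 1) = step I (B t))
    (hsc : StronglyConnected I) {k : Fin n} (hk : B 0 k ∈ Set.Ioo (0:ℝ) 1) :
    ∃ c, ∀ i, Tendsto (fun t => B t i) atTop (𝓝 c) := by
  have hint : ∀ i, B n i ∈ Set.Ioo (0:ℝ) 1 := by
    simpa using mem_Ioo_of_mem_Ioo hI hB hstep hsc hk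
  obtain ⟨iM, hiM⟩ := exists_eq_ciSup_of_finite (f := B n)
  obtain ⟨im, him⟩ := exists_eq_ciInf_of_finite (f := B n)
  obtain ⟨ι, hι0, hι⟩ := exists_pos_le_of_pos fun p : Fin n × Fin n => I p.1 p.2
  have hmin := monotone_iInf hI hB hstep
  have hmax := antitone_iSup hI hB hstep
  have hmx : ∀ t i, (⨅ j, B t j) ≤ B t i := fun t => ciInf_le (Finite.bddBelow_range _)
  have hxM : ∀ t i, B t i ≤ ⨆ j, B t j := fun t => le_ciSup (Finite.bddAbove_range _)
  set gap := fun t => (⨆ j, B t j) - ⨅ j, B t j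
  have hgap : Antitone gap := fun s t hst => sub_le_sub (hmax hst) (hmin hst)
  have hgap0 : ∀ t, 0 ≤ gap t := fun t => sub_nonneg.2 ((hmx t k).trans (hxM t k))
  set φ := 1 - gap n
  have hφ : 0 < φ := by simp only [φ, gap, ← hiM, ← him]; linarith [(hint iM).2, (hint im).1]
  have hδ : 0 < φ * min ι 1 / n := by have := k.pos; positivity
  refine exists_forall_tendsto_of_squeeze hmin hmax hmx hxM
    (tendsto_zero_of_antitone_of_eventually_le_mul hgap hgap0 (sub_lt_self 1 (pow_pos hδ n))
      (q := n) ?_)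
  filter_upwards [eventually_ge_atTop n] with T hT
  exact iSup_sub_iInf_le hI hB hstep hsc hφ.le (by linarith [hgap0 n])
    (le_min hι0.le zero_le_one) (min_le_right _ _)
    (fun a b h => (min_le_left _ _).trans (hι (a, b) h)) (by simp only [φ]; linarith [hgap hT])

end ConfirmationBias

theorem confirmation_bias_consensus_general (n : ℕ)
    (I : Fin n → Fin n → ℝ) (hI : ∀ i j, I i j ∈ Set.Icc (0:ℝ) 1)
    (hsc : StronglyConnected I)
    (B : ℕ → Fin n → ℝ) (hB : ∀ t i, B t i ∈ Set.Icc (0:ℝ) 1)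
    (hupd : ∀ t i, B (t+1) i =
      B t i + (1 / n) * ∑ j, (1 - |B t j - B t i|) * I j i * (B t j - B t i)) :
    ((∃ k : Fin n, B 0 k ≠ 0 ∧ B 0 k ≠ 1) →
      ∃ c : ℝ, ∀ i : Fin n, Filter.Tendsto (fun t => B t i) Filter.atTop (nhds c)) ∧
    ((∀ k : Fin n, B 0 k = 0 ∨ B 0 k = 1) →
      ∀ i t, B (t+1) i = B t i ∧ (B t i = 0 ∨ B t i = 1)) := by
  have hstep : ∀ t, B (t + 1) = ConfirmationBias.step I (B t) := fun t => funext (hupd t)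
  refine ⟨fun ⟨k, hk0, hk1⟩ => ?_, fun h₀ i t => ?_⟩
  · have : Nonempty (Fin n) := ⟨k⟩
    exact ConfirmationBias.exists_forall_tendsto hI hB hstep hsc
      ⟨(hB 0 k).1.lt_of_ne' hk0, (hB 0 k).2.lt_of_ne hk1⟩
  · have hbin := ConfirmationBias.forall_eq_zero_or_eq_one hstep h₀
    exact ⟨by rw [hstep, ConfirmationBias.step_eq_self (hbin t)], hbin t i⟩

theorem confirmation_bias_consensus (n : ℕ) (hn : 0 < n)
    (I : Fin n → Fin n → ℝ) (hI : ∀ i j, I i j ∈ Set.Icc (0:ℝ) 1)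
    (hsc : StronglyConnected I)
    (B : ℕ → Fin n → ℝ) (hB : ∀ t i, B t i ∈ Set.Icc (0:ℝ) 1)
    (hupd : ∀ t i, B (t+1) i =
      B t i + (1 / n) * ∑ j, (1 - |B t j - B t i|) * I j i * (B t j - B t i)) :
    ((∃ k : Fin n, B 0 k ≠ 0 ∧ B 0 k ≠ 1) →
      ∃ c : ℝ, ∀ i : Fin n, Filter.Tendsto (fun t => B t i) Filter.atTop (nhds c)) ∧
    ((∀ k : Fin n, B 0 k = 0 ∨ B 0 k = 1) →
      ∀ i t, B (t+1) i = B t i ∧ (B t i = 0 ∨ B t i = 1)) :=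
  confirmation_bias_consensus_general n I hI hsc B hB hupd
end
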